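/- arXiv:1506.08716 — 8 statements merged into one kernel-verified Lean document; each statement's English description precedes it below -/
import Mathlib

section
/- For every integer n ≥ 1 and every real number x with −1 < x < 1, the n-fold application of the operator ϑ (where (ϑ f)(x) = x·f′(x)) to the function r(x) = √(1+x)/√(1−x) satisfies ϑⁿ(r)(x) = T_n(x) / ((1−x)ⁿ (1+x)^{n−1} √(1−x²)). -/
/-- The numbers T(n,k) defined by T(1,1) = 1, T(1,k) = 0 for k ≠ 1, and the
recurrence T(n+1,k) = k·T(n,k) + T(n,k-1) + (2n-k+2)·T(n,k-2) for n ≥ 1.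
(The value at n = 0 encodes T_0(x) = 1.) -/
def Tc : ℕ → ℤ → ℤ
  | 0, k => if k = 0 then 1 else 0
  | 1, k => if k = 1 then 1 else 0
  | (n+2), k => k * Tc (n+1) k + Tc (n+1) (k-1) + (2*((n : ℤ)+1) - k + 2) * Tc (n+1) (k-2)

/-- The polynomial T_n(x) = ∑_{k=1}^{2n-1} T(n,k) x^k for n ≥ 1, with T_0(x) = 1. -/
noncomputable def Tpoly (n : ℕ) : Polynomial ℤ :=
  if n = 0 then 1 else ∑ k ∈ Finset.Icc 1 (2*n - 1), Polynomial.C (Tc n k) * Polynomial.X ^ k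


noncomputable def Nr (n : ℕ) (y : ℝ) : ℝ :=
  if n = 0 then 1 else ∑ k ∈ Finset.Icc 1 (2*n - 1), (Tc n k : ℝ) * y ^ k

noncomputable def Nd (n : ℕ) (y : ℝ) : ℝ :=
  if n = 0 then 0 else ∑ k ∈ Finset.Icc 1 (2*n - 1), (Tc n k : ℝ) * ((k : ℝ) * y ^ (k - 1))

lemma Tc_vanish : ∀ n : ℕ, 1 ≤ n → ∀ k : ℤ, (k ≤ 0 ∨ 2*(n:ℤ) ≤ k) → Tc n k = 0 := by
  intro n
  induction n with
  | zero => omega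
  | succ m ih =>
    intro _ k hk
    match m, ih with
    | 0, _ =>
      have : k ≠ 1 := by omega
      simp [Tc, this]
    | (m'+1), ih =>
      show (k * Tc (m'+1) k + Tc (m'+1) (k-1) + (2*((m' : ℤ)+1) - k + 2) * Tc (m'+1) (k-2)) = 0
      have h1 : Tc (m'+1) k = 0 := ih (by omega) k (by omega)
      have h2 : Tc (m'+1) (k-1) = 0 := ih (by omega) (k-1) (by omega)
      have h3 : Tc (m'+1) (k-2) = 0 := ih (by omega) (k-2) (by omega)
      rw [h1, h2, h3]; ring

lemma Nr_eq_range (n : ℕ) (hn : 1 ≤ n) (M : ℕ) (hM : 2*n ≤ M) (y : ℝ) :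
    Nr n y = ∑ k ∈ Finset.range M, (Tc n k : ℝ) * y ^ k := by
  rw [Nr, if_neg (by omega)]
  apply Finset.sum_subset
  · intro k hk
    simp only [Finset.mem_Icc] at hk
    simp only [Finset.mem_range]; omega
  · intro k hk hk2
    simp only [Finset.mem_range] at hk
    simp only [Finset.mem_Icc] at hk2
    have : Tc n k = 0 := by
      apply Tc_vanish n hn
      omega
    simp [this]

lemma xNd_eq_range (n : ℕ) (hn : 1 ≤ n) (M : ℕ) (hM : 2*n ≤ M) (y : ℝ) :
    y * Nd n y = ∑ k ∈ Finset.range M, (k : ℝ) * (Tc n k : ℝ) * y ^ k := by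
  rw [Nd, if_neg (by omega), Finset.mul_sum]
  rw [show (∑ k ∈ Finset.Icc 1 (2*n-1), y * ((Tc n k : ℝ) * ((k:ℝ) * y ^ (k-1))))
      = ∑ k ∈ Finset.Icc 1 (2*n-1), (k : ℝ) * (Tc n k : ℝ) * y ^ k from ?_]
  · apply Finset.sum_subset
    · intro k hk
      simp only [Finset.mem_Icc] at hk
      simp only [Finset.mem_range]; omega
    · intro k hk hk2
      simp only [Finset.mem_range] at hk
      simp only [Finset.mem_Icc] at hk2
      have : Tc n k = 0 := by
        apply Tc_vanish n hn
        omega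
      simp [this]
  · apply Finset.sum_congr rfl
    intro k hk
    simp only [Finset.mem_Icc] at hk
    have : y ^ k = y * y ^ (k-1) := by
      rw [← pow_succ']
      congr 1
      omega
    rw [this]; ring

lemma Nr_rec (n : ℕ) (y : ℝ) :
    Nr (n+1) y = y*(1-y^2)*Nd n y + y*(2*(n:ℝ)*y+1)*Nr n y := by
  cases n with
  | zero =>
    simp [Nr, Nd, Tc]
  | succ m =>
    set n := m + 1 with hn
    have hn1 : 1 ≤ n := by omega
    set M := 2*n + 4 with hM
    rw [Nr_eq_range (n+1) (by omega) M (by omega), Nr_eq_range n hn1 M (by omega)]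
    have hxnd : y * Nd n y = ∑ k ∈ Finset.range M, (k : ℝ) * (Tc n k : ℝ) * y ^ k :=
      xNd_eq_range n hn1 M (by omega) y
    -- expand Tc (n+1) k
    have hrec : ∀ k : ℤ, Tc (n+1) k
        = k * Tc n k + Tc n (k-1) + (2*(n:ℤ) - k + 2) * Tc n (k-2) := by
      intro k
      show Tc (m+2) k = _
      rw [show Tc (m+2) k = k * Tc (m+1) k + Tc (m+1) (k-1) + (2*((m:ℤ)+1) - k + 2) * Tc (m+1) (k-2) from rfl]
      push_cast [hn]
      ring_nf
    calc ∑ k ∈ Finset.range M, (Tc (n+1) k : ℝ) * y ^ k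
        = ∑ k ∈ Finset.range M, (((k:ℝ) * (Tc n k : ℝ)) * y ^ k
            + (Tc n ((k:ℤ)-1) : ℝ) * y ^ k
            + ((2*(n:ℝ) - (k:ℝ) + 2) * (Tc n ((k:ℤ)-2) : ℝ)) * y ^ k) := by
          apply Finset.sum_congr rfl
          intro k hk
          rw [hrec (k:ℤ)]
          push_cast
          ring
      _ = (∑ k ∈ Finset.range M, (k:ℝ) * (Tc n k : ℝ) * y ^ k)
            + (∑ k ∈ Finset.range M, (Tc n ((k:ℤ)-1) : ℝ) * y ^ k)
            + (∑ k ∈ Finset.range M, (2*(n:ℝ) - (k:ℝ) + 2) * (Tc n ((k:ℤ)-2) : ℝ) * y ^ k) := by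
          rw [← Finset.sum_add_distrib, ← Finset.sum_add_distrib]
      _ = y*(1-y^2)*Nd n y + y*(2*(n:ℝ)*y+1)*(∑ k ∈ Finset.range M, (Tc n k : ℝ) * y ^ k) := by
          rw [show y*(1-y^2)*Nd n y = (1-y^2)*(y*Nd n y) by ring, hxnd]
          have hB : (∑ k ∈ Finset.range M, (Tc n ((k:ℤ)-1) : ℝ) * y ^ k)
              = y * ∑ k ∈ Finset.range M, (Tc n k : ℝ) * y ^ k := by
            rw [Finset.mul_sum, show M = (2*n+3)+1 from rfl,
              Finset.sum_range_succ' (fun k => (Tc n ((k:ℤ)-1) : ℝ) * y ^ k) (2*n+3),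
              Finset.sum_range_succ (fun k => y * ((Tc n k : ℝ) * y ^ k)) (2*n+3)]
            have h0 : Tc n (((0:ℕ):ℤ)-1) = 0 := Tc_vanish n hn1 _ (by omega)
            have htop : Tc n ((2*n+3:ℕ):ℤ) = 0 := Tc_vanish n hn1 _ (by push_cast; omega)
            rw [h0, htop]
            simp only [Int.cast_zero, zero_mul, mul_zero, add_zero]
            apply Finset.sum_congr rfl
            intro k hk
            have : ((k+1:ℕ):ℤ) - 1 = (k:ℤ) := by push_cast; ring
            rw [this]; ring
          have hC : (∑ k ∈ Finset.range M, (2*(n:ℝ) - (k:ℝ) + 2) * (Tc n ((k:ℤ)-2) : ℝ) * y ^ k)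
              = 2*(n:ℝ)*y^2 * (∑ k ∈ Finset.range M, (Tc n k : ℝ) * y ^ k)
                - y^2 * (∑ k ∈ Finset.range M, (k:ℝ) * (Tc n k : ℝ) * y ^ k) := by
            have step1 : (∑ k ∈ Finset.range M, (2*(n:ℝ) - (k:ℝ) + 2) * (Tc n ((k:ℤ)-2) : ℝ) * y ^ k)
                = ∑ k ∈ Finset.range (2*n+2), (2*(n:ℝ) - (k:ℝ)) * (Tc n k : ℝ) * y ^ (k+2) := by
              rw [show M = (2*n+3)+1 from rfl,
                Finset.sum_range_succ' (fun k => (2*(n:ℝ) - (k:ℝ) + 2) * (Tc n ((k:ℤ)-2) : ℝ) * y ^ k) (2*n+3)]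
              have h0 : Tc n (((0:ℕ):ℤ)-2) = 0 := Tc_vanish n hn1 _ (by omega)
              rw [h0]
              simp only [Int.cast_zero, mul_zero, zero_mul, add_zero]
              rw [show (2*n+3) = (2*n+2)+1 from rfl,
                Finset.sum_range_succ' (fun k => (2*(n:ℝ) - ((k+1:ℕ):ℝ) + 2) * (Tc n (((k+1:ℕ):ℤ)-2) : ℝ) * y ^ (k+1)) (2*n+2)]
              have h1 : Tc n (((0+1:ℕ):ℤ)-2) = 0 := Tc_vanish n hn1 _ (by omega)
              rw [h1]
              simp only [Int.cast_zero, mul_zero, zero_mul, add_zero]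
              apply Finset.sum_congr rfl
              intro k hk
              have e1 : ((k+1+1:ℕ):ℤ) - 2 = (k:ℤ) := by push_cast; ring
              rw [e1]
              push_cast
              ring
            rw [step1]
            have step2 : ∑ k ∈ Finset.range M, (2*(n:ℝ) - (k:ℝ)) * (Tc n k : ℝ) * y ^ (k+2)
                = ∑ k ∈ Finset.range (2*n+2), (2*(n:ℝ) - (k:ℝ)) * (Tc n k : ℝ) * y ^ (k+2) := by
              rw [show M = (2*n+3)+1 from rfl,
                Finset.sum_range_succ, Finset.sum_range_succ]
              have ha : Tc n ((2*n+3:ℕ):ℤ) = 0 := Tc_vanish n hn1 _ (by push_cast; omega)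
              have hb : Tc n ((2*n+2:ℕ):ℤ) = 0 := Tc_vanish n hn1 _ (by push_cast; omega)
              rw [ha, hb]
              simp
            rw [← step2, Finset.mul_sum, Finset.mul_sum, ← Finset.sum_sub_distrib]
            apply Finset.sum_congr rfl
            intro k hk
            ring
          rw [hB, hC]
          ring


lemma hasDerivAt_Nr (n : ℕ) (x : ℝ) : HasDerivAt (Nr n) (Nd n x) x := by
  cases n with
  | zero =>
    simp only [Nr, Nd, if_pos rfl]
    exact hasDerivAt_const x 1
  | succ m =>
    have hfn : Nr (m+1) = fun y => ∑ k ∈ Finset.Icc 1 (2*(m+1) - 1), (Tc (m+1) k : ℝ) * y ^ k := by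
      funext y; simp [Nr]
    rw [hfn]
    simp only [Nd, if_neg (Nat.succ_ne_zero m)]
    exact HasDerivAt.fun_sum fun k _ => (hasDerivAt_pow k x).const_mul ((Tc (m+1) k : ℝ))

noncomputable def gfun (n : ℕ) (y : ℝ) : ℝ :=
  (Nr n y * (1+y)) / ((1-y^2)^n * Real.sqrt (1-y^2))

lemma hasDerivAt_g (n : ℕ) (x : ℝ) (h1 : -1 < x) (h2 : x < 1) :
    HasDerivAt (gfun n)
      (((Nd n x * (1+x) + Nr n x) * (1-x^2) + (2*(n:ℝ)+1)*x*(Nr n x * (1+x)))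
        / ((1-x^2)^(n+1) * Real.sqrt (1-x^2))) x := by
  have hc : (0:ℝ) < 1 - x^2 := by nlinarith
  set s := Real.sqrt (1-x^2) with hsdef
  have hs : 0 < s := Real.sqrt_pos.mpr hc
  have hs2 : s^2 = 1-x^2 := Real.sq_sqrt hc.le
  have hu : HasDerivAt (fun y => Nr n y * (1+y)) (Nd n x * (1+x) + Nr n x * 1) x :=
    (hasDerivAt_Nr n x).mul ((hasDerivAt_id x).const_add 1)
  have hinner : HasDerivAt (fun y : ℝ => 1 - y^2) (-(2*x)) x := by
    simpa using (hasDerivAt_pow 2 x).const_sub 1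
  have hpow := hinner.pow n
  have hsq := hinner.sqrt hc.ne'
  have hv := hpow.mul hsq
  have hvne : (1-x^2)^n * s ≠ 0 := by positivity
  have h := hu.div hv hvne
  refine h.congr_deriv ?_
  symm
  simp only [Pi.mul_apply, Pi.pow_apply]
  rw [← hsdef, ← hs2]
  cases n with
  | zero =>
    simp only [pow_zero, Nat.cast_zero, pow_one, Nat.zero_sub]
    field_simp
    ring
  | succ m =>
    simp only [Nat.add_sub_cancel, Nat.cast_add, Nat.cast_one]
    field_simp
    ring

lemma main_key : ∀ n : ℕ, ∀ x : ℝ, -1 < x → x < 1 →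
    (fun f : ℝ → ℝ => fun y => y * deriv f y)^[n]
        (fun y => Real.sqrt (1 + y) / Real.sqrt (1 - y)) x = gfun n x := by
  intro n
  induction n with
  | zero =>
    intro x h1 h2
    simp only [Function.iterate_zero, id_eq]
    have h1x : (0:ℝ) < 1 - x := by linarith
    have h2x : (0:ℝ) < 1 + x := by linarith
    have hsplit : Real.sqrt (1-x^2) = Real.sqrt (1-x) * Real.sqrt (1+x) := by
      rw [show (1:ℝ)-x^2 = (1-x)*(1+x) by ring, Real.sqrt_mul h1x.le]
    rw [gfun, Nr, if_pos rfl, hsplit, pow_zero, one_mul, one_mul]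
    rw [div_eq_div_iff (Real.sqrt_pos.mpr h1x).ne'
      (by positivity : Real.sqrt (1-x) * Real.sqrt (1+x) ≠ 0)]
    have h := Real.mul_self_sqrt h2x.le
    linear_combination (Real.sqrt (1-x)) * h
  | succ n ih =>
    intro x h1 h2
    rw [Function.iterate_succ_apply']
    show x * deriv ((fun f : ℝ → ℝ => fun y => y * deriv f y)^[n]
        (fun y => Real.sqrt (1 + y) / Real.sqrt (1 - y))) x = _
    have hEq : (fun f : ℝ → ℝ => fun y => y * deriv f y)^[n]
        (fun y => Real.sqrt (1 + y) / Real.sqrt (1 - y)) =ᶠ[nhds x] gfun n :=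
      Filter.eventuallyEq_of_mem (Ioo_mem_nhds h1 h2) (fun y hy => ih y hy.1 hy.2)
    rw [hEq.deriv_eq, (hasDerivAt_g n x h1 h2).deriv]
    have hnum : x * ((Nd n x * (1+x) + Nr n x) * (1-x^2) + (2*(n:ℝ)+1)*x*(Nr n x * (1+x)))
        = Nr (n+1) x * (1+x) := by
      rw [Nr_rec]; ring
    rw [gfun, ← hnum, mul_div_assoc]

/-- For n ≥ 1 and -1 < x < 1, the n-fold application of ϑ = x·d/dx to
r(x) = √(1+x)/√(1-x) satisfies ϑⁿ(r)(x) = T_n(x) / ((1-x)ⁿ (1+x)^(n-1) √(1-x²)). -/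
theorem stmt0 (n : ℕ) (hn : 1 ≤ n) (x : ℝ) (hx1 : -1 < x) (hx2 : x < 1) :
    (fun f : ℝ → ℝ => fun y => y * deriv f y)^[n]
        (fun y => Real.sqrt (1 + y) / Real.sqrt (1 - y)) x
      = (∑ k ∈ Finset.Icc 1 (2*n - 1), (Tc n k : ℝ) * x ^ k) /
          ((1 - x)^n * (1 + x)^(n - 1) * Real.sqrt (1 - x^2)) := by
  rw [main_key n x hx1 hx2, gfun, Nr, if_neg (by omega : n ≠ 0)]
  obtain ⟨m, rfl⟩ : ∃ m, n = m + 1 := ⟨n - 1, by omega⟩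
  simp only [Nat.add_sub_cancel]
  have h1x : (0:ℝ) < 1 - x := by linarith
  have h2x : (0:ℝ) < 1 + x := by linarith
  have hs : 0 < Real.sqrt (1-x^2) := Real.sqrt_pos.mpr (by nlinarith)
  have he : ((1:ℝ)-x^2)^(m+1) = (1-x)^(m+1) * (1+x)^(m+1) := by
    rw [← mul_pow]; congr 1; ring
  rw [he, pow_succ (1+x) m]
  rw [div_eq_div_iff (by positivity) (by positivity)]
  ring
end

section
/- For every integer n ≥ 0, the polynomials T_n satisfy the recurrence T_{n+1}(x) = (2nx + 1)·x·T_n(x) + x(1 − x²)·T_n′(x), where T_n′ denotes the formal derivative. -/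
/-! Comparing coefficients of `X ^ k`, the right-hand side contributes
`k·T(n,k) + T(n,k-1) + (2n-k+2)·T(n,k-2)`, which is the defining recurrence; with the
encoding `T(0,k) = [k = 0]` it holds at `n = 0` as well. What remains is that `Tc n` vanishes
outside `1 ≤ k ≤ 2n-1`, so that every coefficient of `Tpoly n` is read off `Tc n`. -/

open Polynomial

lemma Tc_succ (n : ℕ) (k : ℤ) :
    Tc (n + 1) k = k * Tc n k + Tc n (k - 1) + (2 * (n : ℤ) - k + 2) * Tc n (k - 2) := by
  cases n with
  | zero => simp only [Tc]; split_ifs <;> omega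
  | succ n => simp only [Tc]; push_cast; ring

lemma Tc_eq_zero_of_neg {k : ℤ} (hk : k < 0) (n : ℕ) : Tc n k = 0 := by
  induction n generalizing k with
  | zero => simp [Tc, hk.ne]
  | succ n ih => rw [Tc_succ, ih hk, ih (by omega), ih (by omega)]; ring

lemma Tc_succ_eq_zero_of_le (n : ℕ) {k : ℤ} (hk : 2 * (n : ℤ) + 2 ≤ k) : Tc (n + 1) k = 0 := by
  induction n generalizing k with
  | zero => simp only [Tc]; rw [if_neg (by omega)]
  | succ n ih =>
    push_cast at hk
    rw [Tc_succ, ih (by omega), ih (by omega), ih (by omega)]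
    ring

lemma coeff_Tpoly (n m : ℕ) : (Tpoly n).coeff m = Tc n m := by
  cases n with
  | zero => simp [Tpoly, Tc, coeff_one]
  | succ n =>
    simp only [Tpoly, Nat.add_one_ne_zero, if_false, finsetSum_coeff, coeff_C_mul_X_pow]
    rw [Finset.sum_ite_eq]
    split_ifs with hm
    · rfl
    · rcases Nat.eq_zero_or_pos m with rfl | hpos
      · simp [Tc_succ, Tc_eq_zero_of_neg]
      · rw [Finset.mem_Icc] at hm
        exact (Tc_succ_eq_zero_of_le n (by omega)).symm

lemma coeff_recurrence {R : Type*} [CommRing R] (a : R) (p : R[X]) (c : ℤ → R)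
    (hc : ∀ m : ℕ, p.coeff m = c m) (hneg : ∀ k < 0, c k = 0) (m : ℕ) :
    ((C a * X + 1) * X * p + X * (1 - X ^ 2) * derivative p).coeff m
      = m * c m + c (m - 1) + (a - m + 2) * c (m - 2) := by
  have hsplit : (C a * X + 1) * X * p + X * (1 - X ^ 2) * derivative p
      = X * derivative p + X * p + X ^ 2 * (C a * p - X * derivative p) := by ring
  have hXd : ∀ j : ℕ, (X * derivative p).coeff j = j * p.coeff j := by
    rintro (_ | j)
    · simp
    · rw [coeff_X_mul, coeff_derivative]; push_cast; ring
  rw [hsplit]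
  rcases m with _ | _ | m
  · simp [hXd, hc, hneg]
  · simp [hXd, hc, hneg, coeff_X_pow_mul']
  · simp only [coeff_add, coeff_X_mul, coeff_X_pow_mul, coeff_sub, coeff_C_mul, hXd, hc]
    push_cast
    ring_nf

/-- For every n ≥ 0, T_(n+1)(x) = (2nx + 1)·x·T_n(x) + x(1 - x²)·T_n'(x). -/
theorem stmt1 (n : ℕ) :
    Tpoly (n+1) = (Polynomial.C (2*(n : ℤ)) * Polynomial.X + 1) * Polynomial.X * Tpoly n
      + Polynomial.X * (1 - Polynomial.X^2) * Polynomial.derivative (Tpoly n) := by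
  ext m
  rw [coeff_recurrence _ _ (Tc n) (coeff_Tpoly n) (fun k hk => Tc_eq_zero_of_neg hk n),
    coeff_Tpoly, Tc_succ]
end

section
/- For every integer n ≥ 1, T_n(1) = (2n−1)!!, the double factorial of 2n−1 (that is, the product 1·3·5⋯(2n−1)). -/
open Function
open scoped Nat

lemma Tc_eq_zero {n : ℕ} (hn : 1 ≤ n) {k : ℤ} (hk : k ≤ 0 ∨ 2 * (n : ℤ) ≤ k) : Tc n k = 0 := by
  induction n, hn using Nat.le_induction generalizing k with
  | base => simp only [Tc, ite_eq_right_iff]; omega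
  | succ n hn ih =>
    obtain ⟨m, rfl⟩ : ∃ m, n = m + 1 := ⟨n - 1, by omega⟩
    push_cast at hk ih
    simp only [Tc]
    rw [ih (by omega), ih (by omega), ih (by omega)]
    ring

lemma support_Tc_subset {n : ℕ} (hn : 1 ≤ n) : support (Tc n) ⊆ Set.Ioo 0 (2 * (n : ℤ)) := by
  intro k hk
  by_contra hk'
  exact hk (Tc_eq_zero hn (by simp only [Set.mem_Ioo, not_and_or, not_lt] at hk'; exact hk'))

lemma hasFiniteSupport_Tc {n : ℕ} (hn : 1 ≤ n) : (Tc n).HasFiniteSupport :=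
  (Set.finite_Ioo _ _).subset (support_Tc_subset hn)

lemma finsum_comp_sub {G M : Type*} [AddGroup G] [AddCommMonoid M] (f : G → M) (a : G) :
    ∑ᶠ k, f (k - a) = ∑ᶠ k, f k :=
  finsum_comp_equiv (Equiv.subRight a)

lemma finsum_Tc_succ_succ (n : ℕ) :
    ∑ᶠ k, Tc (n + 2) k = (2 * n + 3) * ∑ᶠ k, Tc (n + 1) k := by
  have hT := hasFiniteSupport_Tc (Nat.le_add_left 1 n)
  have hshift : ∑ᶠ k, (2 * ((n : ℤ) + 1) - k + 2) * Tc (n + 1) (k - 2)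
      = ∑ᶠ k, (2 * ((n : ℤ) + 1) - k) * Tc (n + 1) k := by
    convert finsum_comp_sub (fun k ↦ (2 * ((n : ℤ) + 1) - k) * Tc (n + 1) k) 2 using 3
    ring
  calc ∑ᶠ k, Tc (n + 2) k
      = ∑ᶠ k, (k * Tc (n + 1) k + Tc (n + 1) (k - 1)
          + (2 * ((n : ℤ) + 1) - k + 2) * Tc (n + 1) (k - 2)) := rfl
    _ = ∑ᶠ k, k * Tc (n + 1) k + ∑ᶠ k, Tc (n + 1) k
          + ∑ᶠ k, (2 * ((n : ℤ) + 1) - k) * Tc (n + 1) k := by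
      rw [finsum_add_distrib, finsum_add_distrib, finsum_comp_sub, hshift]
      all_goals fun_prop (disch := exact sub_left_injective)
    _ = ∑ᶠ k, (2 * (n : ℤ) + 3) * Tc (n + 1) k := by
      rw [← finsum_add_distrib, ← finsum_add_distrib]
      · congr 1; ext k; ring
      all_goals fun_prop
    _ = (2 * n + 3) * ∑ᶠ k, Tc (n + 1) k := (mul_finsum _ _).symm

lemma finsum_Tc {n : ℕ} (hn : 1 ≤ n) : ∑ᶠ k, Tc n k = ((2 * n - 1)‼ : ℤ) := by
  induction n, hn using Nat.le_induction with
  | base =>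
    rw [finsum_eq_single _ 1 fun k hk ↦ by simp [Tc, hk]]
    simp [Tc]
  | succ n hn ih =>
    obtain ⟨m, rfl⟩ : ∃ m, n = m + 1 := ⟨n - 1, by omega⟩
    rw [finsum_Tc_succ_succ, ih, show 2 * (m + 1 + 1) - 1 = 2 * m + 1 + 2 by omega,
      Nat.doubleFactorial_add_two, show 2 * (m + 1) - 1 = 2 * m + 1 by omega]
    push_cast
    ring

lemma eval_one_Tpoly {n : ℕ} (hn : 1 ≤ n) : (Tpoly n).eval 1 = ∑ᶠ k, Tc n k := by
  have hsupp :
      support (Tc n) ⊆ ↑((Finset.Icc 1 (2 * n - 1)).map (Nat.castEmbedding : ℕ ↪ ℤ)) := by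
    intro k hk
    obtain ⟨hk0, hk2n⟩ := support_Tc_subset hn hk
    simp only [Finset.coe_map, Set.mem_image, Finset.mem_coe, Finset.mem_Icc,
      Nat.castEmbedding_apply]
    exact ⟨k.toNat, by omega, by omega⟩
  rw [finsum_eq_sum_of_support_subset _ hsupp, Finset.sum_map, Tpoly, if_neg (by omega),
    Polynomial.eval_finsetSum]
  simp

/-- For n ≥ 1, T_n(1) = (2n-1)!!, the double factorial of 2n-1. -/
theorem stmt2 (n : ℕ) (hn : 1 ≤ n) :
    Polynomial.eval (1 : ℤ) (Tpoly n) = (Nat.doubleFactorial (2*n - 1) : ℤ) := by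
  rw [eval_one_Tpoly hn, finsum_Tc hn]
end

section
/- For every integer n ≥ 1, T_{n+1}(−1) = −(2n−1)!!, the negative of the double factorial of 2n−1 (that is, −1·3·5⋯(2n−1)). -/
/-- Sign function: (-1)^k for integer k. -/
def eps (k : ℤ) : ℤ := if Even k then 1 else -1

lemma eps_add_one (k : ℤ) : eps (k + 1) = -eps k := by
  simp only [eps, Int.even_add_one]
  by_cases h : Even k <;> simp [h]

lemma eps_add_two (k : ℤ) : eps (k + 2) = eps k := by
  have : k + 2 = (k + 1) + 1 := by ring
  rw [this, eps_add_one, eps_add_one, neg_neg]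

lemma eps_natCast (n : ℕ) : eps (n : ℤ) = (-1) ^ n := by
  simp only [eps, Int.even_coe_nat]
  by_cases h : Even n
  · simp [h, h.neg_one_pow]
  · simp [h, (Nat.not_even_iff_odd.mp h).neg_one_pow]

lemma Tc_eq_zero_s3 : ∀ n : ℕ, 1 ≤ n → ∀ k : ℤ, (k ≤ 0 ∨ 2 * n ≤ k) → Tc n k = 0 := by
  intro n
  induction n with
  | zero => omega
  | succ m ih =>
    intro _ k hk
    match m with
    | 0 =>
      have : k ≠ 1 := by omega
      simp [Tc, this]
    | m + 1 =>
      have h1 : Tc (m + 1) k = 0 := by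
        apply ih (by omega); push_cast at hk ⊢; omega
      have h2 : Tc (m + 1) (k - 1) = 0 := by
        apply ih (by omega); push_cast at hk ⊢; omega
      have h3 : Tc (m + 1) (k - 2) = 0 := by
        apply ih (by omega); push_cast at hk ⊢; omega
      show (k : ℤ) * Tc (m+1) k + Tc (m+1) (k-1) + (2*((m : ℤ)+1) - k + 2) * Tc (m+1) (k-2) = 0
      rw [h1, h2, h3]; ring

/-- The alternating sum for level n+1. -/
noncomputable def S (n : ℕ) : ℤ := ∑ k ∈ Finset.Icc (1 : ℤ) (2 * n + 1), Tc (n + 1) k * eps k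

lemma S_zero : S 0 = -1 := by
  simp [S, Tc, eps]

lemma S_succ (n : ℕ) : S (n + 1) = (2 * n + 1) * S n := by
  have hz := Tc_eq_zero_s3 (n + 1) (by omega)
  have hS : S (n + 1) =
      ∑ k ∈ Finset.Icc (1 : ℤ) (2 * (n : ℤ) + 3),
        ((k : ℤ) * Tc (n+1) k + Tc (n+1) (k-1) + (2*((n : ℤ)+1) - k + 2) * Tc (n+1) (k-2)) * eps k := by
    unfold S
    have hb : (2 * ((n+1 : ℕ) : ℤ)) + 1 = 2*(n:ℤ)+3 := by push_cast; ring
    rw [hb]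
    rfl
  rw [hS]
  have expand : ∀ k : ℤ,
      ((k : ℤ) * Tc (n+1) k + Tc (n+1) (k-1) + (2*((n : ℤ)+1) - k + 2) * Tc (n+1) (k-2)) * eps k
      = k * Tc (n+1) k * eps k + Tc (n+1) (k-1) * eps k
        + (2*(n : ℤ) + 4 - k) * Tc (n+1) (k-2) * eps k := by
    intro k; ring
  rw [Finset.sum_congr rfl (fun k _ => expand k)]
  rw [Finset.sum_add_distrib, Finset.sum_add_distrib]
  -- piece A
  have hA : ∑ k ∈ Finset.Icc (1 : ℤ) (2 * (n:ℤ) + 3), k * Tc (n+1) k * eps k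
      = ∑ k ∈ Finset.Icc (1 : ℤ) (2 * (n:ℤ) + 1), k * Tc (n+1) k * eps k := by
    symm
    apply Finset.sum_subset
    · intro x hx; simp only [Finset.mem_Icc] at *; omega
    · intro x hx hx'
      simp only [Finset.mem_Icc] at hx hx'
      have : Tc (n+1) x = 0 := hz x (by push_cast; omega)
      rw [this]; ring
  -- piece B
  have hB : ∑ k ∈ Finset.Icc (1 : ℤ) (2 * (n:ℤ) + 3), Tc (n+1) (k-1) * eps k
      = -S n := by
    have h1 : ∑ k ∈ Finset.Icc (1 : ℤ) (2 * (n:ℤ) + 3), Tc (n+1) (k-1) * eps k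
        = ∑ j ∈ Finset.Icc (0 : ℤ) (2 * (n:ℤ) + 2), Tc (n+1) j * eps (j+1) := by
      apply Finset.sum_nbij' (fun k => k - 1) (fun j => j + 1)
      · intro a ha; simp only [Finset.mem_Icc] at *; omega
      · intro a ha; simp only [Finset.mem_Icc] at *; omega
      · intro a _; ring
      · intro a _; ring
      · intro a _; rw [show a - 1 + 1 = a by ring]
    have h2 : ∑ j ∈ Finset.Icc (0 : ℤ) (2 * (n:ℤ) + 2), Tc (n+1) j * eps (j+1)
        = ∑ j ∈ Finset.Icc (1 : ℤ) (2 * (n:ℤ) + 1), Tc (n+1) j * eps (j+1) := by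
      symm
      apply Finset.sum_subset
      · intro x hx; simp only [Finset.mem_Icc] at *; omega
      · intro x hx hx'
        simp only [Finset.mem_Icc] at hx hx'
        have : Tc (n+1) x = 0 := hz x (by push_cast; omega)
        rw [this]; ring
    rw [h1, h2]
    unfold S
    rw [← Finset.sum_neg_distrib]
    apply Finset.sum_congr rfl
    intro k _
    rw [eps_add_one]; ring
  -- piece C
  have hC : ∑ k ∈ Finset.Icc (1 : ℤ) (2 * (n:ℤ) + 3), (2*(n : ℤ) + 4 - k) * Tc (n+1) (k-2) * eps k
      = ∑ j ∈ Finset.Icc (1 : ℤ) (2*(n:ℤ) + 1), (2*(n : ℤ) + 2 - j) * Tc (n+1) j * eps j := by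
    have h1 : ∑ k ∈ Finset.Icc (1 : ℤ) (2 * (n:ℤ) + 3), (2*(n : ℤ) + 4 - k) * Tc (n+1) (k-2) * eps k
        = ∑ j ∈ Finset.Icc (-1 : ℤ) (2 * (n:ℤ) + 1), (2*(n : ℤ) + 2 - j) * Tc (n+1) j * eps (j+2) := by
      apply Finset.sum_nbij' (fun k => k - 2) (fun j => j + 2)
      · intro a ha; simp only [Finset.mem_Icc] at *; omega
      · intro a ha; simp only [Finset.mem_Icc] at *; omega
      · intro a _; ring
      · intro a _; ring
      · intro a _
        rw [show a - 2 + 2 = a by ring]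
        ring
    have h2 : ∑ j ∈ Finset.Icc (-1 : ℤ) (2 * (n:ℤ) + 1), (2*(n : ℤ) + 2 - j) * Tc (n+1) j * eps (j+2)
        = ∑ j ∈ Finset.Icc (1 : ℤ) (2 * (n:ℤ) + 1), (2*(n : ℤ) + 2 - j) * Tc (n+1) j * eps (j+2) := by
      symm
      apply Finset.sum_subset
      · intro x hx; simp only [Finset.mem_Icc] at *; omega
      · intro x hx hx'
        simp only [Finset.mem_Icc] at hx hx'
        have : Tc (n+1) x = 0 := hz x (by push_cast; omega)
        rw [this]; ring
    rw [h1, h2]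
    apply Finset.sum_congr rfl
    intro j _; rw [eps_add_two]
  rw [hA, hB, hC]
  have key : (∑ k ∈ Finset.Icc (1 : ℤ) (2 * (n:ℤ) + 1), k * Tc (n+1) k * eps k)
      + (∑ j ∈ Finset.Icc (1 : ℤ) (2*(n:ℤ) + 1), (2*(n : ℤ) + 2 - j) * Tc (n+1) j * eps j)
      = (2*(n : ℤ) + 2) * S n := by
    unfold S
    rw [Finset.mul_sum, ← Finset.sum_add_distrib]
    apply Finset.sum_congr rfl
    intro k _; ring
  linarith [key]

lemma S_eq (n : ℕ) : S n = -(Nat.doubleFactorial (2*n - 1) : ℤ) := by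
  induction n with
  | zero => simpa using S_zero
  | succ m ih =>
    rw [S_succ, ih]
    have hdf : Nat.doubleFactorial (2*(m+1) - 1) = (2*m+1) * Nat.doubleFactorial (2*m - 1) := by
      match m with
      | 0 => rfl
      | m + 1 =>
        have h1 : 2*(m+1+1) - 1 = (2*m+1) + 2 := by omega
        have h2 : 2*(m+1) - 1 = 2*m + 1 := by omega
        rw [h1, h2, Nat.doubleFactorial_add_two,
          show 2*m+1+2 = 2*(m+1)+1 from by omega]
    rw [hdf]
    push_cast
    ring

/-- For n ≥ 1, T_(n+1)(-1) = -(2n-1)!!, the negative of the double factorial of 2n-1. -/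
theorem stmt3 (n : ℕ) (hn : 1 ≤ n) :
    Polynomial.eval (-1 : ℤ) (Tpoly (n+1)) = -(Nat.doubleFactorial (2*n - 1) : ℤ) := by
  rw [← S_eq]
  unfold Tpoly
  rw [if_neg (by omega)]
  rw [Polynomial.eval_finset_sum]
  simp only [Polynomial.eval_mul, Polynomial.eval_C, Polynomial.eval_pow, Polynomial.eval_X]
  unfold S
  have hrange : 2*(n+1) - 1 = 2*n + 1 := by omega
  rw [hrange]
  apply Finset.sum_nbij' (fun (k : ℕ) => (k : ℤ)) (fun (k : ℤ) => k.toNat)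
  · intro a ha; simp only [Finset.mem_Icc] at *; omega
  · intro a ha; simp only [Finset.mem_Icc] at *; omega
  · intro a _; simp
  · intro a ha; simp only [Finset.mem_Icc] at ha; omega
  · intro a _
    rw [eps_natCast]
end

section
/- For every integer n ≥ 1, the polynomial T_n(x) is symmetric: T(n,k) = T(n, 2n−k) for all 1 ≤ k ≤ 2n−1. -/
theorem Tc_symm : ∀ (n : ℕ) (k : ℤ), Tc n k = Tc n (2 * n - k)
  | 0, k => by simp [Tc]
  | 1, k => by
    simp only [Tc]
    split_ifs <;> omega
  | n + 2, k => by
    -- The reflection k ↦ 2n + 4 - k exchanges the first and the last term of the recurrence.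
    simp only [Tc]
    rw [Tc_symm (n + 1) k, Tc_symm (n + 1) (k - 1), Tc_symm (n + 1) (k - 2)]
    push_cast
    ring_nf

theorem stmt6_general (n k : ℕ) :
    Tc n k = Tc n (2*(n : ℤ) - k) :=
  Tc_symm n k

/-- For n ≥ 1, the polynomial T_n(x) is symmetric: T(n,k) = T(n,2n-k) for
all 1 ≤ k ≤ 2n-1. -/
theorem stmt6 (n k : ℕ) (hn : 1 ≤ n) (hk1 : 1 ≤ k) (hk2 : k ≤ 2*n - 1) :
    Tc n k = Tc n (2*(n : ℤ) - k) :=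
  stmt6_general n k
end

section
/- Let D be the unique ℚ-linear derivation on the polynomial ring ℚ[x,y,z] with D(x) = xyz, D(y) = yz², D(z) = y²z. Then for every integer n ≥ 1, Dⁿ(x²) = 2x²(y+z)^{n−1} · ∑_{k=1}^{n} A(n,k) y^k z^{n−k+1}, where A(n,k) is the Eulerian number. -/
/-!
Inserting the new largest value into σ ∈ S_n at one of its n + 1 positions gives every
permutation of S_{n+1} exactly once. The number of descents is unchanged at the end of σ and
in the middle of each of its des σ descents, and grows by one at the other n - des σ
positions; this is the Eulerian recursion for ∑_{π ∈ S_{n+1}} g(des π).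

On the other side, D multiplies x, y + z, y, z by yz, yz, z², y² respectively, so it maps
2x²(y+z)^m y^(d+1) z^(e+1), with m = d + e, to itself times (m+2)yz + (d+1)z² + (e+1)y²
= (y+z)((d+1)z + (e+1)y): exactly the combination of terms of D^(m+2)(x²) that the
recursion predicts.
-/

/-- The value of the permutation π ∈ S_n at the (0-based) position i, as a natural
number (junk value n outside the range). -/
def permVal {n : ℕ} (π : Equiv.Perm (Fin n)) (i : ℕ) : ℕ :=
  if h : i < n then (π ⟨i, h⟩ : ℕ) else n

/-- The number of descents of π ∈ S_n: the number of indices i ∈ [n-1] with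
π(i) > π(i+1) (here counted with 0-based positions). -/
def desPerm {n : ℕ} (π : Equiv.Perm (Fin n)) : ℕ :=
  ((Finset.range (n - 1)).filter (fun i => permVal π (i+1) < permVal π i)).card

/-- The Eulerian number A(n,k): the number of permutations π ∈ S_n with
des(π) = k - 1. -/
def eulerianNum (n k : ℕ) : ℕ :=
  (Finset.univ.filter (fun π : Equiv.Perm (Fin n) => desPerm π + 1 = k)).card

open Finset

def descentCount (f : ℕ → ℕ) (k : ℕ) : ℕ := #{i ∈ range k | f (i + 1) < f i}

def insertAt (f : ℕ → ℕ) (p v : ℕ) (j : ℕ) : ℕ :=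
  if j < p then f j else if j = p then v else f (j - 1)

lemma descentCount_succ (f : ℕ → ℕ) (k : ℕ) :
    descentCount f (k + 1) = descentCount (fun i => f (i + 1)) k + if f 1 < f 0 then 1 else 0 := by
  simp only [descentCount, card_filter, sum_range_succ']

lemma descentCount_congr {f g : ℕ → ℕ} {k : ℕ} (h : ∀ i ≤ k, f i = g i) :
    descentCount f k = descentCount g k := by
  unfold descentCount
  congr 1
  refine filter_congr fun i hi => ?_
  rw [mem_range] at hi
  rw [h i hi.le, h (i + 1) hi]

lemma insertAt_succ_succ (f : ℕ → ℕ) (p v : ℕ) :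
    (fun j => insertAt f (p + 1) v (j + 1)) = insertAt (fun j => f (j + 1)) p v := by
  funext j
  simp only [insertAt]
  split_ifs <;> first | omega | congr 1; omega

-- A new largest entry at `p` adds a descent, unless it goes at the end or into an
-- existing descent `f (p - 1) > f p`, which it then replaces by the descent `v > f p`.
lemma descentCount_insertAt {f : ℕ → ℕ} {v m p : ℕ} (hp : p ≤ m) (hf : ∀ i < m, f i < v) :
    descentCount (insertAt f p v) m
      = descentCount f (m - 1) + if p = m ∨ (0 < p ∧ f p < f (p - 1)) then 0 else 1 := by
  induction p generalizing f m with
  | zero =>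
    cases m with
    | zero => rfl
    | succ k =>
      rw [descentCount_succ]
      simp [insertAt, hf 0 (by omega)]
  | succ p ih =>
    obtain ⟨k, rfl⟩ : ∃ k, m = k + 1 := ⟨m - 1, by omega⟩
    rw [descentCount_succ, insertAt_succ_succ,
      ih (by omega) (fun i hi => hf (i + 1) (by omega))]
    rcases k with _ | k
    · obtain rfl : p = 0 := by omega
      simp [descentCount, insertAt, (hf 0 (by omega)).le]
    · have h0 := hf 0 (by omega)
      have h1 := hf 1 (by omega)
      rw [Nat.add_sub_cancel, Nat.add_sub_cancel, descentCount_succ f k]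
      rcases p with _ | p <;> simp only [insertAt] <;> norm_num <;> split_ifs <;> omega

lemma card_filter_eq_or_descent (f : ℕ → ℕ) (m : ℕ) :
    #{p ∈ range (m + 1) | p = m ∨ (0 < p ∧ f p < f (p - 1))} = descentCount f (m - 1) + 1 := by
  rw [range_add_one, filter_insert, if_pos (Or.inl rfl), card_insert_of_notMem (by simp)]
  rw [filter_congr fun p hp => or_iff_right (mem_range.mp hp).ne]
  rcases m with _ | k
  · rfl
  · rw [Nat.add_sub_cancel, descentCount, card_filter, card_filter, sum_range_succ']
    simp

-- `σ` with the new largest value `n` inserted at position `p`.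
def insertMax {n : ℕ} (p : Fin (n + 1)) (σ : Equiv.Perm (Fin n)) : Equiv.Perm (Fin (n + 1)) :=
  (finSuccEquiv' p).trans (σ.optionCongr.trans finSuccEquivLast.symm)

@[simp]
lemma insertMax_apply_self {n : ℕ} (p : Fin (n + 1)) (σ : Equiv.Perm (Fin n)) :
    insertMax p σ p = Fin.last n := by
  simp [insertMax]

@[simp]
lemma insertMax_apply_succAbove {n : ℕ} (p : Fin (n + 1)) (σ : Equiv.Perm (Fin n)) (i : Fin n) :
    insertMax p σ (p.succAbove i) = (σ i).castSucc := by
  simp [insertMax]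

lemma permVal_insertMax {n : ℕ} (p : Fin (n + 1)) (σ : Equiv.Perm (Fin n)) {j : ℕ}
    (hj : j ≤ n) : permVal (insertMax p σ) j = insertAt (permVal σ) p n j := by
  unfold permVal insertAt
  beta_reduce
  rw [dif_pos (by omega)]
  rcases lt_trichotomy j p with h | rfl | h
  · have hjn : j < n := by omega
    rw [if_pos h, dif_pos hjn, show (⟨j, _⟩ : Fin (n + 1)) = p.succAbove ⟨j, hjn⟩ from
      (Fin.succAbove_of_castSucc_lt p ⟨j, hjn⟩ h).symm, insertMax_apply_succAbove, Fin.val_castSucc]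
  · simp
  · obtain ⟨i, rfl⟩ : ∃ i, j = i + 1 := ⟨j - 1, by omega⟩
    have hin : i < n := by omega
    rw [if_neg (by omega), if_neg (by omega), Nat.add_sub_cancel, dif_pos hin,
      show (⟨i + 1, _⟩ : Fin (n + 1)) = p.succAbove ⟨i, hin⟩ from
        (Fin.succAbove_of_le_castSucc p ⟨i, hin⟩ (Nat.le_of_lt_succ h)).symm,
      insertMax_apply_succAbove, Fin.val_castSucc]

lemma desPerm_eq_descentCount {n : ℕ} (σ : Equiv.Perm (Fin n)) :
    desPerm σ = descentCount (permVal σ) (n - 1) := rfl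

lemma permVal_lt {n : ℕ} (σ : Equiv.Perm (Fin n)) {i : ℕ} (hi : i < n) : permVal σ i < n := by
  rw [permVal, dif_pos hi]
  exact (σ _).isLt

lemma desPerm_le {n : ℕ} (σ : Equiv.Perm (Fin n)) : desPerm σ ≤ n - 1 :=
  (card_filter_le _ _).trans (card_range _).le

lemma desPerm_insertMax {n : ℕ} (p : Fin (n + 1)) (σ : Equiv.Perm (Fin n)) :
    desPerm (insertMax p σ) = desPerm σ
      + if (p : ℕ) = n ∨ (0 < (p : ℕ) ∧ permVal σ p < permVal σ (p - 1)) then 0 else 1 := by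
  rw [desPerm_eq_descentCount, desPerm_eq_descentCount, Nat.add_sub_cancel,
    descentCount_congr fun j hj => permVal_insertMax p σ hj,
    descentCount_insertAt (Nat.le_of_lt_succ p.isLt) fun i hi => permVal_lt σ hi]

lemma card_filter_insertMax_desPerm_eq {n : ℕ} (σ : Equiv.Perm (Fin n)) :
    #{p : Fin (n + 1) | desPerm (insertMax p σ) = desPerm σ} = desPerm σ + 1 := by
  simp only [desPerm_insertMax, Nat.add_eq_left, ite_eq_left_iff, one_ne_zero, imp_false, not_not]
  rw [desPerm_eq_descentCount, ← card_filter_eq_or_descent, card_filter, card_filter,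
    Fin.sum_univ_eq_sum_range (fun p => if p = n ∨ (0 < p ∧ permVal σ p < permVal σ (p - 1))
      then 1 else 0)]

lemma insertMax_injective {n : ℕ} :
    Function.Injective fun q : Equiv.Perm (Fin n) × Fin (n + 1) => insertMax q.2 q.1 := by
  rintro ⟨σ, p⟩ ⟨τ, q⟩ h
  simp only at h
  obtain rfl : p = q := (insertMax p σ).injective <| by
    rw [insertMax_apply_self, h, insertMax_apply_self]
  refine Prod.ext (Equiv.ext fun i => Fin.castSucc_injective n ?_) rfl
  rw [← insertMax_apply_succAbove, h, insertMax_apply_succAbove]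

lemma insertMax_bijective {n : ℕ} :
    Function.Bijective fun q : Equiv.Perm (Fin n) × Fin (n + 1) => insertMax q.2 q.1 := by
  rw [Fintype.bijective_iff_injective_and_card]
  refine ⟨insertMax_injective, ?_⟩
  simp [Fintype.card_perm, Nat.factorial_succ, mul_comm]

theorem sum_perm_succ_desPerm {M : Type*} [AddCommMonoid M] (g : ℕ → M) (n : ℕ) :
    ∑ π : Equiv.Perm (Fin (n + 1)), g (desPerm π)
      = ∑ σ : Equiv.Perm (Fin n),
          ((desPerm σ + 1) • g (desPerm σ) + (n - desPerm σ) • g (desPerm σ + 1)) := by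
  rw [← insertMax_bijective.sum_comp, Fintype.sum_prod_type]
  refine sum_congr rfl fun σ _ => ?_
  have hcompl := card_filter_add_card_filter_not (s := (univ : Finset (Fin (n + 1))))
    (fun p => desPerm (insertMax p σ) = desPerm σ)
  rw [card_filter_insertMax_desPerm_eq, card_univ, Fintype.card_fin] at hcompl
  have hdes : ∀ p, g (desPerm (insertMax p σ))
      = if desPerm (insertMax p σ) = desPerm σ then g (desPerm σ) else g (desPerm σ + 1) := by
    intro p
    rw [desPerm_insertMax]
    split_ifs <;> simp_all
  simp only [hdes, sum_ite, sum_const, card_filter_insertMax_desPerm_eq]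
  congr 2
  omega

lemma sum_Icc_eulerianNum_nsmul {M : Type*} [AddCommMonoid M] {n : ℕ} (hn : n ≠ 0) (g : ℕ → M) :
    ∑ k ∈ Icc 1 n, eulerianNum n k • g k = ∑ π : Equiv.Perm (Fin n), g (desPerm π + 1) := by
  have hmaps : ∀ π ∈ (univ : Finset (Equiv.Perm (Fin n))), desPerm π + 1 ∈ Icc 1 n :=
    fun π _ => mem_Icc.2 ⟨by omega, by have := desPerm_le π; omega⟩
  rw [← sum_fiberwise_of_maps_to hmaps]
  refine sum_congr rfl fun k _ => ?_
  rw [sum_congr rfl fun π hπ => congrArg g (mem_filter.1 hπ).2, sum_const]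
  rfl

def eulerianSummand {A : Type*} [CommSemiring A] (x y z : A) (m d : ℕ) : A :=
  2 * x ^ 2 * (y + z) ^ m * y ^ (d + 1) * z ^ (m - d + 1)

section Derivation

variable {R A : Type*} [CommSemiring R] [CommSemiring A] [Algebra R A] (D : Derivation R A A)

lemma Derivation.map_pow_of_map_eq_mul {u w : A} (h : D u = u * w) (k : ℕ) :
    D (u ^ k) = k • (u ^ k * w) := by
  rw [D.leibniz_pow, h]
  rcases k with _ | k
  · simp
  · rw [smul_eq_mul, Nat.add_sub_cancel, pow_succ, mul_assoc]

variable {x y z : A} (hx : D x = x * y * z) (hy : D y = y * z ^ 2) (hz : D z = y ^ 2 * z)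
include hx hy hz

lemma derivation_monomial (m a b : ℕ) :
    D (2 * x ^ 2 * (y + z) ^ m * y ^ a * z ^ b)
      = 2 * x ^ 2 * (y + z) ^ m * y ^ a * z ^ b * ((m + 2) * (y * z) + a * z ^ 2 + b * y ^ 2) := by
  have h2 : D 2 = 0 := D.map_natCast 2
  have hs : D (y + z) = (y + z) * (y * z) := by rw [map_add, hy, hz]; ring
  simp only [D.leibniz, h2, D.map_pow_of_map_eq_mul (hx.trans (mul_assoc _ _ _)),
    D.map_pow_of_map_eq_mul hs, D.map_pow_of_map_eq_mul hy,
    D.map_pow_of_map_eq_mul (hz.trans (mul_comm _ _)), smul_eq_mul, nsmul_eq_mul]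
  ring

lemma derivation_eulerianSummand {d m : ℕ} (hd : d ≤ m) :
    D (eulerianSummand x y z m d)
      = (d + 1) • eulerianSummand x y z (m + 1) d
        + (m + 1 - d) • eulerianSummand x y z (m + 1) (d + 1) := by
  obtain ⟨e, rfl⟩ := Nat.exists_eq_add_of_le hd
  rw [eulerianSummand, eulerianSummand, eulerianSummand, derivation_monomial D hx hy hz,
    show d + e - d = e by omega, show d + e + 1 - d = e + 1 by omega,
    show d + e + 1 - (d + 1) = e by omega]
  simp only [nsmul_eq_mul]
  push_cast
  ring

lemma iterate_derivation_sq (m : ℕ) :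
    D^[m + 1] (x ^ 2) = ∑ π : Equiv.Perm (Fin (m + 1)), eulerianSummand x y z m (desPerm π) := by
  induction m with
  | zero =>
    rw [Function.iterate_one, D.map_pow_of_map_eq_mul (hx.trans (mul_assoc _ _ _)),
      sum_perm_succ_desPerm]
    simp [desPerm, eulerianSummand]
    ring
  | succ m ih =>
    rw [Function.iterate_succ_apply', ih, map_sum, sum_perm_succ_desPerm]
    exact sum_congr rfl fun σ _ =>
      derivation_eulerianSummand D hx hy hz ((desPerm_le σ).trans (by omega))

end Derivation

open MvPolynomial in
/-- If D is the (unique) ℚ-linear derivation on ℚ[x,y,z] with D(x) = xyz,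
D(y) = yz², D(z) = y²z, then for n ≥ 1,
Dⁿ(x²) = 2x²(y+z)^(n-1) · ∑_(k=1)^(n) A(n,k) y^k z^(n-k+1). -/
theorem stmt9 (D : Derivation ℚ (MvPolynomial (Fin 3) ℚ) (MvPolynomial (Fin 3) ℚ))
    (hx : D (X 0) = X 0 * X 1 * X 2)
    (hy : D (X 1) = X 1 * X 2 ^ 2)
    (hz : D (X 2) = X 1 ^ 2 * X 2)
    (n : ℕ) (hn : 1 ≤ n) :
    (⇑D)^[n] (X 0 ^ 2)
      = 2 * X 0 ^ 2 * (X 1 + X 2) ^ (n - 1) * ∑ k ∈ Finset.Icc 1 n,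
          C ((eulerianNum n k : ℚ)) * X 1 ^ k * X 2 ^ (n - k + 1) := by
  obtain ⟨m, rfl⟩ := Nat.exists_eq_add_of_le' hn
  have hsum := sum_Icc_eulerianNum_nsmul (Nat.add_one_ne_zero m) fun k =>
    2 * X 0 ^ 2 * (X 1 + X 2 : MvPolynomial (Fin 3) ℚ) ^ m * X 1 ^ k * X 2 ^ (m + 1 - k + 1)
  simp only [Nat.add_sub_add_right] at hsum
  rw [iterate_derivation_sq D hx hy hz, Nat.add_sub_cancel, mul_sum]
  refine (hsum.symm.trans (sum_congr rfl fun k _ => ?_))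
  rw [map_natCast, nsmul_eq_mul]
  ring
end

section
/- For every integer n ≥ 1, T_{n+1}(x) = x · ∑_{k=0}^{n} C(n,k) S_k(x) N_{n−k}(x²), where C(n,k) is the binomial coefficient, as an identity of polynomials. -/
/-- The numbers S(n,k): S(1,1) = S(1,2) = 1, S(1,k) = 0 otherwise, and
S(n,k) = k·S(n-1,k) + S(n-1,k-1) + (2n-k+1)·S(n-1,k-2) for n ≥ 2. -/
def Sc : ℕ → ℤ → ℤ
  | 0, k => if k = 0 then 1 else 0
  | 1, k => if k = 1 ∨ k = 2 then 1 else 0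
  | (n+2), k => k * Sc (n+1) k + Sc (n+1) (k-1) + (2*((n : ℤ)+2) - k + 1) * Sc (n+1) (k-2)

/-- The flag-descent polynomial S_n(x) = ∑_(k=1)^(2n) S(n,k) x^(k-1) for n ≥ 1,
with S_0(x) = 1. -/
noncomputable def Spoly (n : ℕ) : Polynomial ℤ :=
  if n = 0 then 1 else ∑ k ∈ Finset.Icc 1 (2*n), Polynomial.C (Sc n k) * Polynomial.X ^ (k-1)

/-- The polynomials N_n(x) defined by N_0(x) = 1 and
N_(n+1)(x) = (2n+1)x·N_n(x) + 2x(1-x)·N_n'(x). -/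
noncomputable def Npoly : ℕ → Polynomial ℤ
  | 0 => 1
  | (n+1) => Polynomial.C (2*(n : ℤ)+1) * Polynomial.X * Npoly n
      + 2 * Polynomial.X * (1 - Polynomial.X) * Polynomial.derivative (Npoly n)

open Polynomial Finset

/-!
All three families are orbits of first-order operators built from the single derivation
`θ = x(1 - x²) d/dx` of `ℤ[x]`:
`T_{n+1} = θ T_n + (x + 2n x²) T_n`, `S_{k+1} = θ S_k + (1 + x + 2k x²) S_k` and, for
`M_j = N_j(x²)`, `M_{j+1} = θ M_j + (2j + 1) x² M_j`. Since the multipliers of `S_k` and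
`M_{n-k}` add up to `1 + x + (2n + 1) x²` independently of `k`, the Leibniz rule makes the binomial
convolution `A_n = ∑ C(n,k) S_k M_{n-k}` satisfy `A_{n+1} = θ A_n + (1 + x + (2n + 1) x²) A_n`,
and as `θ x = x(1 - x²)` this is exactly the recurrence of `T_{n+1}` transported to `x A_n`.
The first two recurrences are the defining recurrences of `T(n,k)` and `S(n,k)` read on
coefficients.
-/

theorem Derivation.sum_antidiagonal_choose_succ_nsmul_of_succ_eq {R A : Type*} [CommSemiring R]
    [CommSemiring A] [Algebra R A] (D : Derivation R A A) {s m a b c : ℕ → A}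
    (hs : ∀ i, s (i + 1) = D (s i) + a i * s i) (hm : ∀ j, m (j + 1) = D (m j) + b j * m j)
    (habc : ∀ i j, a i + b j = c (i + j)) (n : ℕ) :
    ∑ ij ∈ antidiagonal (n + 1), (n + 1).choose ij.1 • (s ij.1 * m ij.2) =
      D (∑ ij ∈ antidiagonal n, n.choose ij.1 • (s ij.1 * m ij.2)) +
        c n * ∑ ij ∈ antidiagonal n, n.choose ij.1 • (s ij.1 * m ij.2) := by
  rw [sum_antidiagonal_choose_succ_nsmul (fun i j => s i * m j), map_sum, mul_sum,
    ← sum_add_distrib, ← sum_add_distrib]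
  refine sum_congr rfl fun ij hij => ?_
  rw [HasAntidiagonal.mem_antidiagonal] at hij
  rw [Nat.choose_symm_of_eq_add hij.symm, ← hij, ← habc, hs, hm, map_nsmul, D.leibniz,
    smul_eq_mul, smul_eq_mul, ← smul_add, mul_smul_comm, ← smul_add]
  congr 1
  ring

noncomputable def θ : Derivation ℤ ℤ[X] ℤ[X] := mkDerivation ℤ (X * (1 - X ^ 2))

lemma θ_apply (f : ℤ[X]) : θ f = X * (1 - X ^ 2) * derivative f := by
  rw [θ, mkDerivation_apply, smul_eq_mul, mul_comm]

lemma θ_X : θ X = X * (1 - X ^ 2) := mkDerivation_X ℤ _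

lemma coeff_X_mul_derivative {R : Type*} [Semiring R] (f : R[X]) (k : ℕ) :
    (X * derivative f).coeff k = k * f.coeff k := by
  cases k with
  | zero => simp
  | succ k => rw [coeff_X_mul, coeff_derivative, Nat.cast_comm, Nat.cast_succ]

section Coefficients

variable (f : ℤ[X]) (a b : ℤ)

lemma θ_add_mul_eq : θ f + (C a + X + C b * X ^ 2) * f =
    X * derivative f + C a * f + X * f + X ^ 2 * (C b * f - X * derivative f) := by
  rw [θ_apply]; ring

lemma coeff_θ_add_mul_zero : (θ f + (C a + X + C b * X ^ 2) * f).coeff 0 = a * f.coeff 0 := by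
  rw [θ_add_mul_eq, coeff_add, coeff_add, coeff_add, coeff_X_mul_derivative]
  simp

lemma coeff_θ_add_mul_one :
    (θ f + (C a + X + C b * X ^ 2) * f).coeff 1 = (a + 1) * f.coeff 1 + f.coeff 0 := by
  rw [θ_add_mul_eq, coeff_add, coeff_add, coeff_add, coeff_X_mul_derivative]
  simp [coeff_X_pow_mul']
  ring

lemma coeff_θ_add_mul_add_two (m : ℕ) :
    (θ f + (C a + X + C b * X ^ 2) * f).coeff (m + 2) =
      (a + m + 2) * f.coeff (m + 2) + f.coeff (m + 1) + (b - m) * f.coeff m := by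
  rw [θ_add_mul_eq, coeff_add, coeff_add, coeff_add, coeff_X_mul_derivative]
  simp only [coeff_sub, coeff_C_mul, coeff_X_mul_derivative, coeff_X_pow_mul, coeff_X_mul]
  push_cast
  ring

end Coefficients

lemma Tc_succ_succ (n : ℕ) (k : ℤ) : Tc (n + 2) k
    = k * Tc (n + 1) k + Tc (n + 1) (k - 1) + (2 * ((n : ℤ) + 1) - k + 2) * Tc (n + 1) (k - 2) :=
  rfl

lemma Sc_succ_succ (n : ℕ) (k : ℤ) : Sc (n + 2) k
    = k * Sc (n + 1) k + Sc (n + 1) (k - 1) + (2 * ((n : ℤ) + 2) - k + 1) * Sc (n + 1) (k - 2) :=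
  rfl

lemma Tc_succ_eq_zero (n : ℕ) {k : ℤ} (hk : k ≤ 0 ∨ 2 * ((n : ℤ) + 1) ≤ k) :
    Tc (n + 1) k = 0 := by
  induction n generalizing k with
  | zero => simp only [Tc]; split_ifs <;> omega
  | succ n ih =>
    rw [Tc_succ_succ, ih (by omega), ih (by omega), ih (by omega)]
    ring

lemma Sc_succ_eq_zero (n : ℕ) {k : ℤ} (hk : k ≤ 0 ∨ 2 * ((n : ℤ) + 1) < k) :
    Sc (n + 1) k = 0 := by
  induction n generalizing k with
  | zero => simp only [Sc]; split_ifs <;> omega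
  | succ n ih =>
    rw [Sc_succ_succ, ih (by omega), ih (by omega), ih (by omega)]
    ring

lemma coeff_Tpoly_succ (n m : ℕ) : (Tpoly (n + 1)).coeff m = Tc (n + 1) m := by
  rw [Tpoly, if_neg n.succ_ne_zero, finsetSum_coeff]
  simp only [coeff_C_mul, coeff_X_pow, mul_ite, mul_one, mul_zero, sum_ite_eq, mem_Icc]
  split_ifs with hm
  · rfl
  · exact (Tc_succ_eq_zero n (by omega)).symm

lemma coeff_Spoly_succ (n m : ℕ) : (Spoly (n + 1)).coeff m = Sc (n + 1) (m + 1) := by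
  rw [Spoly, if_neg n.succ_ne_zero, finsetSum_coeff, sum_eq_single (m + 1)]
  · simp
  · intro k hk hkm
    rw [coeff_C_mul_X_pow, if_neg (by simp only [mem_Icc] at hk; omega)]
  · intro hm
    rw [coeff_C_mul_X_pow, Sc_succ_eq_zero n (by simp only [mem_Icc] at hm; omega)]
    simp

lemma Tpoly_succ (n : ℕ) :
    Tpoly (n + 1) = θ (Tpoly n) + (X + C (2 * n : ℤ) * X ^ 2) * Tpoly n := by
  cases n with
  | zero => simp [Tpoly, Tc]
  | succ n =>
    rw [← zero_add (X + _), ← C_0, ← add_assoc]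
    have vanish (k : ℤ) (hk : k ≤ 0) : Tc (n + 1) k = 0 := Tc_succ_eq_zero n (.inl hk)
    ext m
    match m with
    | 0 =>
      rw [coeff_θ_add_mul_zero, coeff_Tpoly_succ, coeff_Tpoly_succ, Tc_succ_succ]
      simp [vanish]
    | 1 =>
      simp only [coeff_θ_add_mul_one, coeff_Tpoly_succ, Tc_succ_succ]
      simp [vanish]
    | m + 2 =>
      simp only [coeff_θ_add_mul_add_two, coeff_Tpoly_succ, Tc_succ_succ]
      push_cast
      ring_nf

lemma Spoly_succ (n : ℕ) :
    Spoly (n + 1) = θ (Spoly n) + (1 + X + C (2 * n : ℤ) * X ^ 2) * Spoly n := by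
  cases n with
  | zero =>
    ext m
    rw [coeff_Spoly_succ]
    rcases m with _ | _ | m <;> simp [Sc, Spoly, coeff_one, coeff_X]
    omega
  | succ n =>
    rw [← C_1]
    have vanish (k : ℤ) (hk : k ≤ 0) : Sc (n + 1) k = 0 := Sc_succ_eq_zero n (.inl hk)
    ext m
    match m with
    | 0 =>
      rw [coeff_θ_add_mul_zero, coeff_Spoly_succ, coeff_Spoly_succ, Sc_succ_succ]
      simp [vanish]
    | 1 =>
      simp only [coeff_θ_add_mul_one, coeff_Spoly_succ, Sc_succ_succ]
      simp [vanish]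
    | m + 2 =>
      simp only [coeff_θ_add_mul_add_two, coeff_Spoly_succ, Sc_succ_succ]
      push_cast
      ring_nf

lemma Npoly_comp_X_sq_succ (n : ℕ) : (Npoly (n + 1)).comp (X ^ 2) =
    θ ((Npoly n).comp (X ^ 2)) + C (2 * n + 1 : ℤ) * X ^ 2 * (Npoly n).comp (X ^ 2) := by
  rw [θ_apply, derivative_comp, Npoly]
  simp only [add_comp, mul_comp, C_comp, X_comp, one_comp, sub_comp, derivative_X_pow,
    Polynomial.ofNat_comp]
  norm_num
  ring

theorem Tpoly_succ_eq_X_mul_sum_antidiagonal (n : ℕ) : Tpoly (n + 1) =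
    X * ∑ ij ∈ antidiagonal n, n.choose ij.1 • (Spoly ij.1 * (Npoly ij.2).comp (X ^ 2)) := by
  induction n with
  | zero => simp [Tpoly, Tc, Spoly, Npoly]
  | succ n ih =>
    have hc (i j : ℕ) : (1 + X + C (2 * i : ℤ) * X ^ 2) + C (2 * j + 1 : ℤ) * X ^ 2 =
        1 + X + C (2 * (i + j : ℕ) + 1 : ℤ) * X ^ 2 := by
      simp only [Nat.cast_add, map_add, map_mul, map_natCast, map_one]; ring
    rw [Tpoly_succ, ih, θ.sum_antidiagonal_choose_succ_nsmul_of_succ_eq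
      (m := fun j => (Npoly j).comp (X ^ 2)) (c := fun k => 1 + X + C (2 * k + 1 : ℤ) * X ^ 2)
      Spoly_succ Npoly_comp_X_sq_succ hc, θ.leibniz, θ_X, smul_eq_mul, smul_eq_mul]
    simp only [Nat.cast_add, Nat.cast_one, map_add, map_mul, map_natCast, map_one, map_ofNat]
    ring

theorem stmt12_general (n : ℕ) :
    Tpoly (n+1) = Polynomial.X * ∑ k ∈ Finset.range (n+1),
      Polynomial.C ((n.choose k : ℤ)) * Spoly k
        * ((Npoly (n-k)).comp (Polynomial.X ^ 2)) := by
  rw [Tpoly_succ_eq_X_mul_sum_antidiagonal, Nat.sum_antidiagonal_eq_sum_range_succ_mk]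
  simp only [nsmul_eq_mul, map_natCast, mul_assoc]

/-- For n ≥ 1, T_(n+1)(x) = x · ∑_(k=0)^(n) C(n,k) S_k(x) N_(n-k)(x²). -/
theorem stmt12 (n : ℕ) (hn : 1 ≤ n) :
    Tpoly (n+1) = Polynomial.X * ∑ k ∈ Finset.range (n+1),
      Polynomial.C ((n.choose k : ℤ)) * Spoly k
        * ((Npoly (n-k)).comp (Polynomial.X ^ 2)) :=
  stmt12_general n
end

section
/- For every integer n ≥ 1 and every Stirling permutation σ ∈ Q_n, the map Φ preserves the number of ascents: asc(σ) = asc(Φ(σ)), where asc of a sequence τ(1)⋯τ(2n) is the number of indices i ∈ [2n] with τ(i−1) < τ(i), with the convention τ(0) = 0. -/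
/-- A Stirling permutation of order n, modeled as a function σ : ℕ → ℕ supported on
positions 1,…,2n: every value 1 ≤ j ≤ n occurs exactly twice, and all entries between
the two occurrences of j are larger than j. -/
def IsStirlingPerm (n : ℕ) (σ : ℕ → ℕ) : Prop :=
  (∀ i : ℕ, i = 0 ∨ 2*n < i → σ i = 0) ∧
  (∀ i : ℕ, 1 ≤ i → i ≤ 2*n → 1 ≤ σ i ∧ σ i ≤ n) ∧
  (∀ j : ℕ, 1 ≤ j → j ≤ n → ((Finset.Icc 1 (2*n)).filter (fun i => σ i = j)).card = 2) ∧
  (∀ i j k : ℕ, 1 ≤ i → i < j → j < k → k ≤ 2*n → σ i = σ k → σ i < σ j)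

open Classical in
/-- The map Φ sending a Stirling permutation σ of order n to the permutation of [2n]
obtained by replacing the first occurrence of each value j by 2j and the second
occurrence by 2j - 1. -/
noncomputable def Phi (n : ℕ) (σ : ℕ → ℕ) : ℕ → ℕ := fun i =>
  if 1 ≤ i ∧ i ≤ 2*n then
    (if ∀ i' : ℕ, 1 ≤ i' → i' < i → σ i' ≠ σ i then 2 * σ i else 2 * σ i - 1)
  else 0

/-- The number of ascents of a sequence τ at positions 1,…,2n: the number of indices
i ∈ [2n] with τ(i-1) < τ(i), where τ(0) = 0. -/
def ascSeq (n : ℕ) (τ : ℕ → ℕ) : ℕ :=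
  ((Finset.Icc 1 (2*n)).filter (fun i => τ (i-1) < τ i)).card

/-!
Φ replaces each entry `σ i` by `2 σ i` or `2 σ i - 1`, so it preserves every strict comparison
between adjacent entries of different values. The only remaining adjacent pairs are plateaus
`σ (i-1) = σ i`; there position `i` carries a repeated value, which Φ labels `2 σ i - 1`, the
smaller of the two possible labels, so the plateau stays a non-ascent.
-/

section Phi

variable {n : ℕ} {σ : ℕ → ℕ} {i : ℕ}

lemma Phi_mem_Icc (h0 : σ 0 = 0) (hi : i ≤ 2 * n) :
    Phi n σ i ∈ Set.Icc (2 * σ i - 1) (2 * σ i) := by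
  rcases Nat.eq_zero_or_pos i with rfl | hi1
  · simp [Phi, h0]
  · unfold Phi
    rw [if_pos ⟨hi1, hi⟩]
    split <;> constructor <;> omega

lemma Phi_of_repeat {i' : ℕ} (hi' : 1 ≤ i') (hlt : i' < i) (hi : i ≤ 2 * n)
    (heq : σ i' = σ i) : Phi n σ i = 2 * σ i - 1 := by
  have hrepeat : ¬ ∀ j, 1 ≤ j → j < i → σ j ≠ σ i := fun h => h i' hi' hlt heq
  unfold Phi
  rw [if_pos ⟨by omega, hi⟩, if_neg hrepeat]

lemma lt_iff_Phi_lt (h0 : σ 0 = 0) (hpos : 1 ≤ σ i) (hi1 : 1 ≤ i) (hi : i ≤ 2 * n) :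
    σ (i - 1) < σ i ↔ Phi n σ (i - 1) < Phi n σ i := by
  obtain ⟨hprev_lo, hprev_hi⟩ := Phi_mem_Icc (n := n) h0 (show i - 1 ≤ 2 * n by omega)
  obtain ⟨hcur_lo, hcur_hi⟩ := Phi_mem_Icc (n := n) h0 hi
  constructor
  · intro hlt
    omega
  · intro hPhi
    by_contra hle
    rcases Nat.lt_or_eq_of_le (not_lt.mp hle) with hgt | heq
    · omega
    · have hprev : 1 ≤ i - 1 := by
        by_contra hzero
        rw [show i - 1 = 0 by omega, h0] at heq
        omega
      have := Phi_of_repeat (n := n) hprev (by omega) hi heq.symm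
      omega

end Phi

theorem stmt14_general (n : ℕ) (σ : ℕ → ℕ) (hσ : IsStirlingPerm n σ) :
    ascSeq n σ = ascSeq n (Phi n σ) := by
  obtain ⟨h0, hrange, -, -⟩ := hσ
  unfold ascSeq
  congr 1
  refine Finset.filter_congr fun i hi => ?_
  obtain ⟨hi1, hi⟩ := Finset.mem_Icc.mp hi
  exact lt_iff_Phi_lt (h0 0 (Or.inl rfl)) (hrange i hi1 hi).1 hi1 hi

/-- For n ≥ 1 and every Stirling permutation σ of order n, Φ preserves the number of
ascents: asc(σ) = asc(Φ(σ)). -/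
theorem stmt14 (n : ℕ) (hn : 1 ≤ n) (σ : ℕ → ℕ) (hσ : IsStirlingPerm n σ) :
    ascSeq n σ = ascSeq n (Phi n σ) :=
  stmt14_general n σ hσ
end
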